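/- arXiv:1609.05617 — 2 statements merged into one kernel-verified Lean document; each statement's English description precedes it below -/
import Mathlib

section
/- For every compact set K ⊂ ℝ there exists r > 0 such that for all t ∈ [-2π/3, 2π/3] and all h ∈ K, the modulus of the characteristic function φ_h(t) = cos(t) + i·tanh(h)·sin(t) satisfies |φ_h(t)| ≤ exp(-r t² L''(h)), where L(h) = log cosh h and L''(h) = 1 - tanh²(h). -/
/-!
Writing s = 1 - tanh² h, one has |φ_h(t)|² = cos² t + tanh² h sin² t = 1 - s sin² t, and
√(1 - x) ≤ exp (-x / 2). Concavity of sin on [0, π] puts sin t above the chord through the origin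
and (2π/3, √3/2), which on |t| ≤ 2π/3 gives t² ≤ 6 sin² t; hence r = 1/12 works, for every h.
-/

open Real

namespace Real

lemma div_mul_sin_le_sin {x y : ℝ} (hx : 0 ≤ x) (hxy : x ≤ y) (hy : y ≤ π) :
    x / y * sin y ≤ sin x := by
  rcases (hx.trans hxy).eq_or_lt with rfl | hy0
  · simp [le_antisymm hxy hx]
  have hchord := strictConcaveOn_sin_Icc.concaveOn.2 (x := 0) (y := y) ⟨le_rfl, pi_pos.le⟩
    ⟨hy0.le, hy⟩ (sub_nonneg.2 ((div_le_one hy0).2 hxy)) (div_nonneg hx hy0.le)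
    (sub_add_cancel 1 (x / y))
  simpa [smul_eq_mul, div_mul_cancel₀ x hy0.ne'] using hchord

lemma sq_le_six_mul_sin_sq_of_nonneg {t : ℝ} (h0 : 0 ≤ t) (ht : t ≤ 2 * π / 3) :
    t ^ 2 ≤ 6 * sin t ^ 2 := by
  have hchord := div_mul_sin_le_sin h0 ht (by linarith [pi_pos])
  have hsin : sin (2 * π / 3) ^ 2 = 3 / 4 := by
    rw [show 2 * π / 3 = π - π / 3 by ring, sin_pi_sub, sq_sin_pi_div_three]
  have hsin0 : 0 ≤ sin (2 * π / 3) :=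
    sin_nonneg_of_nonneg_of_le_pi (by positivity) (by linarith [pi_pos])
  have hsq := pow_le_pow_left₀ (mul_nonneg (by positivity) hsin0) hchord 2
  rw [mul_pow, div_pow, hsin] at hsq
  have hpi : π ^ 2 ≤ 81 / 8 := by nlinarith [pi_pos, pi_lt_d2]
  have hscale : t ^ 2 = t ^ 2 / (2 * π / 3) ^ 2 * (3 / 4) * (16 * π ^ 2 / 27) := by
    field_simp [pi_pos.ne']
    ring
  have hq : 0 ≤ t ^ 2 / (2 * π / 3) ^ 2 * (3 / 4) := by positivity
  nlinarith

lemma sq_le_six_mul_sin_sq {t : ℝ} (ht : |t| ≤ 2 * π / 3) : t ^ 2 ≤ 6 * sin t ^ 2 := by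
  rcases le_total 0 t with h0 | h0
  · exact sq_le_six_mul_sin_sq_of_nonneg h0 (abs_of_nonneg h0 ▸ ht)
  · simpa [sin_neg] using sq_le_six_mul_sin_sq_of_nonneg (neg_nonneg.2 h0) (abs_of_nonpos h0 ▸ ht)

lemma sqrt_one_sub_le_exp_neg_half (x : ℝ) : √(1 - x) ≤ exp (-x / 2) := by
  rw [exp_half]
  exact sqrt_le_sqrt (by linarith [add_one_le_exp (-x)])

lemma norm_cos_add_I_mul_mul_sin (a t : ℝ) :
    ‖(cos t : ℂ) + Complex.I * a * sin t‖ = √(1 - (1 - a ^ 2) * sin t ^ 2) := by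
  rw [show (cos t : ℂ) + Complex.I * a * sin t = (cos t : ℂ) + (a * sin t : ℝ) * Complex.I by
    push_cast; ring, Complex.norm_add_mul_I]
  congr 1
  linear_combination sin_sq_add_cos_sq t

end Real

theorem charFun_gaussian_bound_general (K : Set ℝ) :
    ∃ r > (0 : ℝ), ∀ t ∈ Set.Icc (-(2 * Real.pi / 3)) (2 * Real.pi / 3), ∀ h ∈ K,
      ‖(Real.cos t : ℂ) + Complex.I * (Real.tanh h : ℂ) * (Real.sin t : ℂ)‖
        ≤ Real.exp (-r * t ^ 2 * (1 - Real.tanh h ^ 2)) := by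
  refine ⟨1 / 12, by norm_num, fun t ht h _ ↦ ?_⟩
  have hs : 0 ≤ 1 - tanh h ^ 2 := sub_nonneg.2 (tanh_sq_lt_one h).le
  have ht6 := sq_le_six_mul_sin_sq (abs_le.2 ht)
  rw [norm_cos_add_I_mul_mul_sin]
  refine (sqrt_one_sub_le_exp_neg_half _).trans (exp_le_exp.2 ?_)
  nlinarith

/-- On every compact set K of asymmetry parameters h, the characteristic function
φ_h(t) = cos t + i tanh(h) sin t of a ±1 Bernoulli with mean tanh h satisfies the
Gaussian-type bound |φ_h(t)| ≤ exp(-r t² L''(h)) on [-2π/3, 2π/3], where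
L''(h) = 1 - tanh² h. -/
theorem charFun_gaussian_bound (K : Set ℝ) (hK : IsCompact K) :
    ∃ r > (0 : ℝ), ∀ t ∈ Set.Icc (-(2 * Real.pi / 3)) (2 * Real.pi / 3), ∀ h ∈ K,
      ‖(Real.cos t : ℂ) + Complex.I * (Real.tanh h : ℂ) * (Real.sin t : ℂ)‖
        ≤ Real.exp (-r * t ^ 2 * (1 - Real.tanh h ^ 2)) :=
  charFun_gaussian_bound_general K
end

section
/- For the partition function Z_N = Σ_{S ∈ C_N} (p_N/(1−p_N))^{A(S)/2}, where C_N is the set of lattice bridges of length 2N and A(S) the area under S, one has the identity log(Z_N / 2^{2N}) = Σ_{i=1}^{2N} L(h_i^N) + log ν_N(S(2N)=0), where h_i^N = (2σ/(2N)^α)(N − i + 1/2), L(h) = log cosh h, and ν_N is the product measure of ±1 Bernoulli variables X_i with E[X_i] = tanh(h_i^N). -/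
open Finset

/-!
In terms of its steps `x i = ±1`, a path has area `∑ i (2N - i) x i`; on bridges `∑ i x i = 0`,
so the weight can be recentred to `λ ^ (A / 2) = exp (∑ i h_{i+1} x i)`. Since
`exp (t x) = cosh t * (1 + tanh t * x)` for `x = ±1`, this weight divided by `2 ^ (2N)` is
`∏ i cosh h_{i+1}` times the `ν_N`-probability of the path. Summing over bridges gives
`Z_N / 2 ^ (2N) = (∏ i cosh h_i) * ν_N(S(2N) = 0)`, and both factors are positive.
-/

namespace Real

theorem exp_mul_eq_cosh_mul_one_add_tanh_mul {x : ℝ} (hx : x = 1 ∨ x = -1) (t : ℝ) :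
    exp (t * x) = cosh t * (1 + tanh t * x) := by
  have hsinh : cosh t * tanh t = sinh t := by
    rw [tanh_eq_sinh_div_cosh, mul_div_cancel₀ _ (cosh_pos t).ne']
  rcases hx with rfl | rfl
  · rw [mul_one, mul_one]
    linear_combination (cosh_add_sinh t).symm - hsinh
  · rw [mul_neg_one, mul_neg_one]
    linear_combination (cosh_sub_sinh t).symm + hsinh

theorem one_add_tanh_mul_pos {x : ℝ} (hx : |x| ≤ 1) (t : ℝ) : 0 < 1 + tanh t * x := by
  have : |tanh t * x| < 1 := by
    rw [abs_mul]
    exact lt_of_le_of_lt (mul_le_of_le_one_right (abs_nonneg _) hx) (abs_tanh_lt_one t)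
  linarith [neg_abs_le (tanh t * x)]

theorem exp_sum_mul_div_two_pow_card {ι : Type*} [Fintype ι] (t x : ι → ℝ)
    (hx : ∀ i, x i = 1 ∨ x i = -1) :
    exp (∑ i, t i * x i) / 2 ^ Fintype.card ι
      = (∏ i, cosh (t i)) * ∏ i, (1 + tanh (t i) * x i) / 2 := by
  rw [exp_sum, ← prod_mul_distrib, ← card_univ, ← prod_const, ← prod_div_distrib]
  refine prod_congr rfl fun i _ => ?_
  rw [exp_mul_eq_cosh_mul_one_add_tanh_mul (hx i), mul_div_assoc]

end Real

theorem sum_range_sum_filter_lt_succ {R : Type*} [Ring R] (n : ℕ) (f : Fin n → R) :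
    ∑ k ∈ range n, ∑ i ∈ univ.filter (fun i : Fin n => (i : ℕ) < k + 1), f i
      = ∑ i : Fin n, ((n : R) - i) * f i := by
  simp_rw [sum_filter]
  rw [sum_comm]
  refine sum_congr rfl fun i _ => ?_
  have hIco : (range n).filter (fun k => (i : ℕ) < k + 1) = Ico (i : ℕ) n := by
    ext k; simp only [mem_filter, mem_range, mem_Ico]; omega
  rw [← sum_filter, hIco, sum_const, Nat.card_Ico, nsmul_eq_mul, Nat.cast_sub i.isLt.le]

theorem sum_sub_const_mul_of_sum_eq_zero {ι R : Type*} [CommRing R] (s : Finset ι)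
    (a x : ι → R) (b : R) (hx : ∑ i ∈ s, x i = 0) :
    ∑ i ∈ s, (a i - b) * x i = ∑ i ∈ s, a i * x i := by
  simp only [sub_mul, sum_sub_distrib, ← mul_sum, hx, mul_zero, sub_zero]

theorem sum_fin_two_mul_ite_lt_eq_zero (N : ℕ) :
    ∑ i : Fin (2 * N), (if (i : ℕ) < N then (1 : ℤ) else -1) = 0 := by
  rw [Fin.sum_univ_eq_sum_range (fun i => if i < N then (1 : ℤ) else -1), two_mul, sum_range_add,
    sum_congr rfl fun i hi => if_pos (mem_range.1 hi),
    sum_congr rfl fun i _ => if_neg (Nat.not_lt.2 (Nat.le_add_right N i))]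
  simp

-- A path is encoded by its steps `X i : Bool` (`true` for `+1`), and `lam` is `p_N / (1 - p_N)`.
theorem partition_function_identity_general (N : ℕ) (σ α : ℝ) :
    let lam : ℝ := Real.exp (4 * σ / (2 * N : ℝ) ^ α)
    let h : ℕ → ℝ := fun i => (2 * σ / (2 * N : ℝ) ^ α) * ((N : ℝ) - i + 1 / 2)
    let step : Bool → ℤ := fun b => if b then 1 else -1
    let S : (Fin (2 * N) → Bool) → ℕ → ℤ := fun X k =>
      ∑ i ∈ Finset.univ.filter (fun i : Fin (2 * N) => (i : ℕ) < k), step (X i)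
    let A : (Fin (2 * N) → Bool) → ℤ := fun X => ∑ k ∈ Finset.range (2 * N), S X (k + 1)
    let Z : ℝ := ∑ X ∈ Finset.univ.filter (fun X : Fin (2 * N) → Bool => S X (2 * N) = 0),
      lam ^ ((A X : ℝ) / 2)
    let ν : ℝ := ∑ X ∈ Finset.univ.filter (fun X : Fin (2 * N) → Bool => S X (2 * N) = 0),
      ∏ i : Fin (2 * N), (1 + Real.tanh (h ((i : ℕ) + 1)) * (step (X i) : ℝ)) / 2
    Real.log (Z / 2 ^ (2 * N))
      = (∑ i ∈ Finset.range (2 * N), Real.log (Real.cosh (h (i + 1)))) + Real.log ν := by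
  intro lam h step S A Z ν
  have hstep : ∀ b, (step b : ℝ) = 1 ∨ (step b : ℝ) = -1 := by
    intro b; cases b <;> simp [step]
  have hS : ∀ X, S X (2 * N) = ∑ i, step (X i) := fun X => by
    simp only [S, filter_true_of_mem fun (i : Fin (2 * N)) _ => i.isLt]
  have hA : ∀ X, (A X : ℝ) = ∑ i : Fin (2 * N), ((2 * N : ℝ) - i) * step (X i) := fun X => by
    simp only [A, S]
    push_cast
    exact_mod_cast sum_range_sum_filter_lt_succ (2 * N) fun i => (step (X i) : ℝ)
  have hweight : ∀ X ∈ univ.filter (fun X => S X (2 * N) = 0),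
      lam ^ ((A X : ℝ) / 2) = Real.exp (∑ i : Fin (2 * N), h (i + 1) * step (X i)) := by
    intro X hX
    have hbridge : ∑ i : Fin (2 * N), (step (X i) : ℝ) = 0 := by
      exact_mod_cast (hS X).symm.trans (mem_filter.1 hX).2
    have hh : ∀ i : Fin (2 * N), h (i + 1)
        = 2 * σ / (2 * N : ℝ) ^ α * ((2 * N : ℝ) - i) - 2 * σ / (2 * N : ℝ) ^ α * (N + 1 / 2) := by
      intro i; simp only [h]; push_cast; ring
    simp_rw [hh]
    rw [sum_sub_const_mul_of_sum_eq_zero _ _ _ _ hbridge]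
    simp_rw [mul_assoc]
    rw [← mul_sum, ← hA, ← Real.exp_mul]
    ring_nf
  have hZ : Z / 2 ^ (2 * N) = (∏ i ∈ range (2 * N), Real.cosh (h (i + 1))) * ν := by
    simp only [Z, ν, sum_div, mul_sum]
    refine sum_congr rfl fun X hX => ?_
    rw [hweight X hX, ← Fin.prod_univ_eq_prod_range fun i => Real.cosh (h (i + 1))]
    simpa only [Fintype.card_fin] using Real.exp_sum_mul_div_two_pow_card
      (fun i : Fin (2 * N) => h (i + 1)) (fun i => step (X i)) fun i => hstep (X i)
  have hν : 0 < ν := by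
    refine sum_pos (fun X _ => prod_pos fun i _ => ?_) ⟨fun i => decide ((i : ℕ) < N), ?_⟩
    · refine div_pos (Real.one_add_tanh_mul_pos ?_ _) two_pos
      rcases hstep (X i) with hs | hs <;> simp [hs]
    · rw [mem_filter, hS]
      simpa [step] using sum_fin_two_mul_ite_lt_eq_zero N
  rw [hZ, Real.log_mul (prod_pos fun i _ => Real.cosh_pos _).ne' hν.ne',
    Real.log_prod fun i _ => (Real.cosh_pos _).ne']

/-- Identity for the partition function of the weakly asymmetric bridge:
log (Z_N / 2^{2N}) = Σ_i L(h_i^N) + log ν_N(S(2N) = 0), where bridges are encoded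
by their ±1 steps (themselves encoded by booleans), λ = p_N/(1-p_N) = exp(4σ/(2N)^α),
L = log cosh, and ν_N is the product of ±1 Bernoulli laws with means tanh(h_i^N). -/
theorem partition_function_identity (N : ℕ) (hN : 1 ≤ N) (σ α : ℝ) (hσ : 0 < σ)
    (hα : 0 < α) :
    let lam : ℝ := Real.exp (4 * σ / (2 * N : ℝ) ^ α)
    let h : ℕ → ℝ := fun i => (2 * σ / (2 * N : ℝ) ^ α) * ((N : ℝ) - i + 1 / 2)
    let step : Bool → ℤ := fun b => if b then 1 else -1
    let S : (Fin (2 * N) → Bool) → ℕ → ℤ := fun X k =>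
      ∑ i ∈ Finset.univ.filter (fun i : Fin (2 * N) => (i : ℕ) < k), step (X i)
    let A : (Fin (2 * N) → Bool) → ℤ := fun X => ∑ k ∈ Finset.range (2 * N), S X (k + 1)
    let Z : ℝ := ∑ X ∈ Finset.univ.filter (fun X : Fin (2 * N) → Bool => S X (2 * N) = 0),
      lam ^ ((A X : ℝ) / 2)
    let ν : ℝ := ∑ X ∈ Finset.univ.filter (fun X : Fin (2 * N) → Bool => S X (2 * N) = 0),
      ∏ i : Fin (2 * N), (1 + Real.tanh (h ((i : ℕ) + 1)) * (step (X i) : ℝ)) / 2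
    Real.log (Z / 2 ^ (2 * N))
      = (∑ i ∈ Finset.range (2 * N), Real.log (Real.cosh (h (i + 1)))) + Real.log ν :=
  partition_function_identity_general N σ α
end
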